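/- The hamiltonian H is convex on ℝⁿ; in particular H(p) = max( sup{ ∇H(q)·(p−q) + H(q) : q ∈ Sing(M)ᶜ }, μ(p) − 1 ) for all p ∈ ℝⁿ. -/

import Mathlib

open MeasureTheory Set
open scoped RealInnerProductSpace ENNReal

/-!
`H p` is the least `h ≥ μ p - 1` with `D(p, h) := ∫ M v / (1 + h - ⟪v, p⟫) dv ≤ 1`: on `Sing` this
is `h = μ p - 1`, and off `Sing` the map `D(p, ·)` is strictly decreasing and equals `1` at `H p`.
Both constraints are jointly convex in `(p, h)` (`μ` is a support function and `x ↦ 1 / x` is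
convex), so `H` is the lower boundary of a convex subset of `ℝⁿ × ℝ`, hence convex. The formula
follows from the tangent-plane inequality of a convex function, with equality at `q = p` off `Sing`.
-/

theorem ENNReal.inv_ofReal_add_le {a b t s : ℝ} (ht : 0 ≤ t) (hs : 0 ≤ s) (hts : t + s = 1) :
    (ENNReal.ofReal (t * a + s * b))⁻¹ ≤
      ENNReal.ofReal t * (ENNReal.ofReal a)⁻¹ + ENNReal.ofReal s * (ENNReal.ofReal b)⁻¹ := by
  rcases ht.eq_or_lt with rfl | ht
  · simp [show s = 1 by linarith]
  rcases hs.eq_or_lt with rfl | hs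
  · simp [show t = 1 by linarith]
  rcases le_or_gt a 0 with ha | ha
  · simp [ENNReal.ofReal_eq_zero.2 ha, ht]
  rcases le_or_gt b 0 with hb | hb
  · simp [ENNReal.ofReal_eq_zero.2 hb, hs]
  have hinv := (convexOn_zpow (𝕜 := ℝ) (-1)).2 ha hb ht.le hs.le hts
  simp only [zpow_neg_one, smul_eq_mul] at hinv
  rw [← ENNReal.ofReal_inv_of_pos ha, ← ENNReal.ofReal_inv_of_pos hb,
    ← ENNReal.ofReal_inv_of_pos (by positivity), ← ENNReal.ofReal_mul ht.le,
    ← ENNReal.ofReal_mul hs.le, ← ENNReal.ofReal_add (by positivity) (by positivity)]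
  exact ENNReal.ofReal_le_ofReal hinv

theorem ConvexOn.tangent_le_of_hasFDerivAt {E : Type*} [NormedAddCommGroup E] [NormedSpace ℝ E]
    {f : E → ℝ} {f' : E →L[ℝ] ℝ} {q : E} (hf : ConvexOn ℝ univ f) (hq : HasFDerivAt f f' q)
    (p : E) : f' (p - q) + f q ≤ f p := by
  have hline : ConvexOn ℝ univ (f ∘ AffineMap.lineMap q p) :=
    hf.comp_affineMap (AffineMap.lineMap q p)
  have hderiv : HasDerivAt (f ∘ AffineMap.lineMap q p) (f' (p - q)) (0 : ℝ) := by
    refine hq.comp_hasDerivAt_of_eq (0 : ℝ) ?_ (by simp)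
    simpa using AffineMap.hasDerivAt_lineMap
  have := hline.le_slope_of_hasDerivAt trivial trivial zero_lt_one hderiv
  simp only [slope_def_field, Function.comp_apply, AffineMap.lineMap_apply_zero,
    AffineMap.lineMap_apply_one, sub_zero, div_one] at this
  linarith

theorem ConvexOn.tangent_le_of_hasGradientAt {E : Type*} [NormedAddCommGroup E]
    [InnerProductSpace ℝ E] [CompleteSpace E] {f : E → ℝ} {g q : E} (hf : ConvexOn ℝ univ f)
    (hq : HasGradientAt f g q) (p : E) : ⟪g, p - q⟫ + f q ≤ f p :=
  hf.tangent_le_of_hasFDerivAt hq.hasFDerivAt p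

theorem convexOn_univ_of_isGreatest_inner {E : Type*} [NormedAddCommGroup E]
    [InnerProductSpace ℝ E] {K : Set E} {μ : E → ℝ}
    (hμ : ∀ p, IsGreatest ((fun v => ⟪v, p⟫) '' K) (μ p)) : ConvexOn ℝ univ μ := by
  refine ⟨convex_univ, fun p₁ _ p₂ _ t s ht hs hts => ?_⟩
  obtain ⟨v, hv, hμv⟩ := (hμ (t • p₁ + s • p₂)).1
  have hμv : ⟪v, t • p₁ + s • p₂⟫ = μ (t • p₁ + s • p₂) := hμv
  have h₁ : ⟪v, p₁⟫ ≤ μ p₁ := (hμ p₁).2 ⟨v, hv, rfl⟩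
  have h₂ : ⟪v, p₂⟫ ≤ μ p₂ := (hμ p₂).2 ⟨v, hv, rfl⟩
  rw [← hμv, inner_add_right, real_inner_smul_right, real_inner_smul_right, smul_eq_mul,
    smul_eq_mul]
  gcongr

theorem convexOn_univ_of_isLeast {E : Type*} [AddCommGroup E] [Module ℝ E] {S : Set (E × ℝ)}
    {H : E → ℝ} (hS : Convex ℝ S) (hH : ∀ p, IsLeast {h | (p, h) ∈ S} (H p)) :
    ConvexOn ℝ univ H := by
  refine ⟨convex_univ, fun p₁ _ p₂ _ t s ht hs hts => (hH _).2 ?_⟩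
  simpa using hS (hH p₁).1 (hH p₂).1 ht hs hts

section Dispersion

variable {E : Type*} [NormedAddCommGroup E] [InnerProductSpace ℝ E] [MeasurableSpace E]
  (ν : Measure E) (M : E → ℝ)

/-- `∫ M v / (1 + h - ⟪v, p⟫) dν(v)` computed in `ℝ≥0∞`: where `M v > 0` and the denominator is
nonpositive, the integrand is `⊤` rather than a junk real value. -/
noncomputable def dispersion (p : E) (h : ℝ) : ℝ≥0∞ :=
  ∫⁻ v, ENNReal.ofReal (M v) / ENNReal.ofReal (1 + h - ⟪v, p⟫) ∂ν

variable {ν M}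

theorem aemeasurable_dispersion_integrand [OpensMeasurableSpace E] (hM : AEMeasurable M ν)
    (p : E) (h : ℝ) :
    AEMeasurable (fun v => ENNReal.ofReal (M v) / ENNReal.ofReal (1 + h - ⟪v, p⟫)) ν :=
  hM.ennreal_ofReal.div <| (measurable_const.sub
    (continuous_id.inner continuous_const).measurable).ennreal_ofReal.aemeasurable

theorem dispersion_convexComb_le [OpensMeasurableSpace E] (hM : AEMeasurable M ν)
    {p₁ p₂ : E} {h₁ h₂ t s : ℝ} (ht : 0 ≤ t) (hs : 0 ≤ s) (hts : t + s = 1) :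
    dispersion ν M (t • p₁ + s • p₂) (t * h₁ + s * h₂) ≤
      ENNReal.ofReal t * dispersion ν M p₁ h₁ + ENNReal.ofReal s * dispersion ν M p₂ h₂ := by
  have hpoint : ∀ v, ENNReal.ofReal (M v) /
        ENNReal.ofReal (1 + (t * h₁ + s * h₂) - ⟪v, t • p₁ + s • p₂⟫) ≤
      ENNReal.ofReal t * (ENNReal.ofReal (M v) / ENNReal.ofReal (1 + h₁ - ⟪v, p₁⟫)) +
        ENNReal.ofReal s * (ENNReal.ofReal (M v) / ENNReal.ofReal (1 + h₂ - ⟪v, p₂⟫)) := by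
    intro v
    have hsplit : 1 + (t * h₁ + s * h₂) - ⟪v, t • p₁ + s • p₂⟫ =
        t * (1 + h₁ - ⟪v, p₁⟫) + s * (1 + h₂ - ⟪v, p₂⟫) := by
      rw [inner_add_right, real_inner_smul_right, real_inner_smul_right]
      linear_combination -hts
    simp only [hsplit, div_eq_mul_inv, mul_left_comm (ENNReal.ofReal t),
      mul_left_comm (ENNReal.ofReal s), ← mul_add]
    gcongr
    exact ENNReal.inv_ofReal_add_le ht hs hts
  calc dispersion ν M (t • p₁ + s • p₂) (t * h₁ + s * h₂)
      ≤ ∫⁻ v, ENNReal.ofReal t * (ENNReal.ofReal (M v) / ENNReal.ofReal (1 + h₁ - ⟪v, p₁⟫)) +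
        ENNReal.ofReal s * (ENNReal.ofReal (M v) / ENNReal.ofReal (1 + h₂ - ⟪v, p₂⟫)) ∂ν :=
        lintegral_mono hpoint
    _ = _ := by
      rw [lintegral_add_left' ((aemeasurable_dispersion_integrand hM p₁ h₁).const_mul _),
        lintegral_const_mul' _ _ ENNReal.ofReal_ne_top,
        lintegral_const_mul' _ _ ENNReal.ofReal_ne_top, dispersion, dispersion]

theorem convex_dispersion_sublevel [OpensMeasurableSpace E] (hM : AEMeasurable M ν) {μ : E → ℝ}
    (hμ : ConvexOn ℝ univ μ) :
    Convex ℝ {x : E × ℝ | μ x.1 - 1 ≤ x.2 ∧ dispersion ν M x.1 x.2 ≤ 1} := by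
  rintro ⟨p₁, h₁⟩ ⟨hμ₁, hD₁⟩ ⟨p₂, h₂⟩ ⟨hμ₂, hD₂⟩ t s ht hs hts
  refine ⟨?_, ?_⟩
  · have := hμ.2 (mem_univ p₁) (mem_univ p₂) ht hs hts
    simp only [smul_eq_mul, Prod.smul_mk, Prod.mk_add_mk] at this ⊢
    nlinarith
  · simp only [Prod.smul_mk, Prod.mk_add_mk, smul_eq_mul]
    calc dispersion ν M (t • p₁ + s • p₂) (t * h₁ + s * h₂)
        ≤ ENNReal.ofReal t * dispersion ν M p₁ h₁ + ENNReal.ofReal s * dispersion ν M p₂ h₂ :=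
          dispersion_convexComb_le hM ht hs hts
      _ ≤ ENNReal.ofReal t * 1 + ENNReal.ofReal s * 1 := by gcongr
      _ = 1 := by rw [mul_one, mul_one, ← ENNReal.ofReal_add ht hs, hts, ENNReal.ofReal_one]

theorem dispersion_lt_of_lt [OpensMeasurableSpace E] (hM : AEMeasurable M ν)
    (hpos : ν {v | 0 < M v} ≠ 0) {p : E} {h h' : ℝ} (hfin : dispersion ν M p h' ≠ ⊤)
    (hden : ∀ v, 0 < M v → ⟪v, p⟫ < 1 + h') (hh : h < h') :
    dispersion ν M p h' < dispersion ν M p h := by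
  refine lintegral_strict_mono_of_ae_le_of_ae_lt_on (aemeasurable_dispersion_integrand hM p h)
    hfin (ae_of_all _ fun v => ?_) hpos (ae_of_all _ fun v hv => ?_)
  · exact ENNReal.div_le_div_left (ENNReal.ofReal_le_ofReal (by linarith)) _
  · have hMv : ENNReal.ofReal (M v) ≠ 0 := by simpa using hv
    have hden' : 0 < 1 + h' - ⟪v, p⟫ := by linarith [hden v hv]
    have hlt : ENNReal.ofReal (M v) / ENNReal.ofReal (1 + h' - ⟪v, p⟫) < ⊤ :=
      ENNReal.div_lt_top ENNReal.ofReal_ne_top (ENNReal.ofReal_pos.2 hden').ne'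
    rcases le_or_gt (1 + h - ⟪v, p⟫) 0 with hnonpos | hden_pos
    · rwa [ENNReal.ofReal_eq_zero.2 hnonpos, ENNReal.div_zero hMv]
    · exact ENNReal.div_lt_div_left hMv ENNReal.ofReal_ne_top
        ((ENNReal.ofReal_lt_ofReal_iff hden').2 (by linarith))

theorem isLeast_of_dispersion_eq_one [OpensMeasurableSpace E] (hM : AEMeasurable M ν)
    (hpos : ν {v | 0 < M v} ≠ 0) {p : E} {m h₀ : ℝ} (hden : ∀ v, M v ≠ 0 → ⟪v, p⟫ ≤ m)
    (hlt : m - 1 < h₀) (hD : dispersion ν M p h₀ = 1) :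
    IsLeast {h | m - 1 ≤ h ∧ dispersion ν M p h ≤ 1} h₀ := by
  refine ⟨⟨hlt.le, hD.le⟩, fun h ⟨_, hh⟩ => not_lt.1 fun hh₀ => ?_⟩
  have := dispersion_lt_of_lt (p := p) hM hpos (by simp [hD])
    (fun v hv => by linarith [hden v hv.ne']) hh₀
  exact (hD ▸ this).not_ge hh

theorem dispersion_zero_neg_one [OpensMeasurableSpace E] (hM : AEMeasurable M ν)
    (hpos : ν {v | 0 < M v} ≠ 0) : dispersion ν M 0 (-1) = ⊤ := by
  refine lintegral_eq_top_of_measure_eq_top_ne_zero (aemeasurable_dispersion_integrand hM 0 (-1))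
    (fun hzero => hpos (measure_mono_null (fun v hv => ?_) hzero))
  simp only [mem_ofPred_eq, inner_zero_right] at hv ⊢
  norm_num [ENNReal.div_zero (ENNReal.ofReal_pos.2 hv).ne']

theorem dispersion_eq_one_of_integral_eq_one (hM0 : ∀ v, 0 ≤ M v) {p : E} {h : ℝ}
    (hden : ∀ v, M v ≠ 0 → ⟪v, p⟫ < 1 + h) (hint : ∫ v, M v / (1 + h - ⟪v, p⟫) ∂ν = 1) :
    dispersion ν M p h = 1 := by
  have hfrac : ∀ v, ENNReal.ofReal (M v) / ENNReal.ofReal (1 + h - ⟪v, p⟫) =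
      ENNReal.ofReal (M v / (1 + h - ⟪v, p⟫)) := by
    intro v
    rcases eq_or_ne (M v) 0 with hMv | hMv
    · simp [hMv]
    · rw [ENNReal.ofReal_div_of_pos (by linarith [hden v hMv])]
  have hnonneg : ∀ v, 0 ≤ M v / (1 + h - ⟪v, p⟫) := by
    intro v
    rcases eq_or_ne (M v) 0 with hMv | hMv
    · simp [hMv]
    · exact div_nonneg (hM0 v) (by linarith [hden v hMv])
  have hint' : Integrable (fun v => M v / (1 + h - ⟪v, p⟫)) ν :=
    Integrable.of_integral_ne_zero (by rw [hint]; exact one_ne_zero)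
  rw [dispersion, funext hfrac, ← ofReal_integral_eq_lintegral_ofReal hint'
    (ae_of_all _ hnonneg), hint, ENNReal.ofReal_one]

end Dispersion

theorem stmt_13_general {n : ℕ} (V : Set (EuclideanSpace ℝ (Fin n)))
    (M : EuclideanSpace ℝ (Fin n) → ℝ)
    (hM0 : ∀ v, 0 ≤ M v) (hMsupp : Function.support M ⊆ V)
    (hMint : IntegrableOn M V) (hM1 : ∫ v in V, M v = 1)
    (μ : EuclideanSpace ℝ (Fin n) → ℝ)
    (hμ : ∀ p, IsGreatest ((fun v => ⟪v, p⟫) '' convexHull ℝ V) (μ p))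
    (Sing : Set (EuclideanSpace ℝ (Fin n)))
    (hSing : Sing = {p : EuclideanSpace ℝ (Fin n) |
      ∫⁻ v in V, ENNReal.ofReal (M v) / ENNReal.ofReal (μ p - ⟪v, p⟫) ≤ 1})
    (H : EuclideanSpace ℝ (Fin n) → ℝ)
    (hHsing : ∀ p ∈ Sing, H p = μ p - 1)
    (hHreg : ∀ p ∉ Sing, μ p - 1 < H p ∧ ∫ v in V, M v / (1 + H p - ⟪v, p⟫) = 1)
    (G : EuclideanSpace ℝ (Fin n) → EuclideanSpace ℝ (Fin n))
    (hG : ∀ q ∉ Sing, HasGradientAt H (G q) q) :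
    ConvexOn ℝ Set.univ H ∧
    ∀ p : EuclideanSpace ℝ (Fin n),
      H p = max (sSup {x : ℝ | ∃ q ∉ Sing, x = ⟪G q, p - q⟫ + H q}) (μ p - 1) := by
  set ν := volume.restrict V
  have hMν : AEMeasurable M ν := hMint.aemeasurable
  have hle_μ : ∀ p v, M v ≠ 0 → ⟪v, p⟫ ≤ μ p := fun p v hv =>
    (hμ p).2 ⟨v, subset_convexHull ℝ V (hMsupp hv), rfl⟩
  have hpos : ν {v | 0 < M v} ≠ 0 := by
    have hsupp : Function.support M = {v | 0 < M v} := by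
      ext v
      simp [(hM0 v).lt_iff_ne, eq_comm]
    rw [← hsupp]
    exact ((integral_pos_iff_support_of_nonneg hM0 hMint).1 (hM1 ▸ one_pos)).ne'
  have hSing' : ∀ p, p ∈ Sing ↔ dispersion ν M p (μ p - 1) ≤ 1 := by
    simp [hSing, dispersion, ν]
  have hleast : ∀ p, IsLeast {h | μ p - 1 ≤ h ∧ dispersion ν M p h ≤ 1} (H p) := by
    intro p
    by_cases hp : p ∈ Sing
    · rw [hHsing p hp]
      exact ⟨⟨le_rfl, (hSing' p).1 hp⟩, fun h hh => hh.1⟩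
    · have hden : ∀ v, M v ≠ 0 → ⟪v, p⟫ < 1 + H p := fun v hv => by
        linarith [hle_μ p v hv, (hHreg p hp).1]
      exact isLeast_of_dispersion_eq_one hMν hpos (hle_μ p) (hHreg p hp).1
        (dispersion_eq_one_of_integral_eq_one hM0 hden (hHreg p hp).2)
  have hconvH : ConvexOn ℝ univ H := convexOn_univ_of_isLeast
    (convex_dispersion_sublevel hMν (convexOn_univ_of_isGreatest_inner hμ)) hleast
  have h0Sing : (0 : EuclideanSpace ℝ (Fin n)) ∉ Sing := by
    have hμ0 : μ 0 = 0 := by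
      obtain ⟨_, _, hμ0⟩ := (hμ 0).1
      simpa using hμ0.symm
    rw [hSing' 0, hμ0, zero_sub, dispersion_zero_neg_one hMν hpos]
    simp
  refine ⟨hconvH, fun p => ?_⟩
  set S := {x : ℝ | ∃ q ∉ Sing, x = ⟪G q, p - q⟫ + H q}
  have htangent : ∀ x ∈ S, x ≤ H p := by
    rintro _ ⟨q, hq, rfl⟩
    exact hconvH.tangent_le_of_hasGradientAt (hG q hq) p
  by_cases hp : p ∈ Sing
  · have := csSup_le (s := S) ⟨_, 0, h0Sing, rfl⟩ htangent
    rw [hHsing p hp] at this ⊢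
    exact (max_eq_right this).symm
  · rw [IsGreatest.csSup_eq (s := S) ⟨⟨p, hp, by simp⟩, htangent⟩, max_eq_left (hHreg p hp).1.le]

/-- The hamiltonian H is convex on ℝⁿ; in particular
H(p) = max( sup{ ∇H(q)·(p−q) + H(q) : q ∈ Sing(M)ᶜ }, μ(p) − 1 ). -/
theorem stmt_13 {n : ℕ} (V : Set (EuclideanSpace ℝ (Fin n)))
    (hVc : IsCompact V) (hVne : V.Nonempty)
    (h0 : (0 : EuclideanSpace ℝ (Fin n)) ∈ interior (convexHull ℝ V))
    (M : EuclideanSpace ℝ (Fin n) → ℝ)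
    (hM0 : ∀ v, 0 ≤ M v) (hMsupp : Function.support M ⊆ V)
    (hMint : IntegrableOn M V) (hM1 : ∫ v in V, M v = 1)
    (μ : EuclideanSpace ℝ (Fin n) → ℝ)
    (hμ : ∀ p, IsGreatest ((fun v => ⟪v, p⟫) '' convexHull ℝ V) (μ p))
    (Sing : Set (EuclideanSpace ℝ (Fin n)))
    (hSing : Sing = {p : EuclideanSpace ℝ (Fin n) |
      ∫⁻ v in V, ENNReal.ofReal (M v) / ENNReal.ofReal (μ p - ⟪v, p⟫) ≤ 1})
    (H : EuclideanSpace ℝ (Fin n) → ℝ)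
    (hHsing : ∀ p ∈ Sing, H p = μ p - 1)
    (hHreg : ∀ p ∉ Sing, μ p - 1 < H p ∧ ∫ v in V, M v / (1 + H p - ⟪v, p⟫) = 1)
    (G : EuclideanSpace ℝ (Fin n) → EuclideanSpace ℝ (Fin n))
    (hG : ∀ q ∉ Sing, HasGradientAt H (G q) q)
    (hGcont : ContinuousOn G Singᶜ)
    (hconv : ConvexOn ℝ Singᶜ H)
    (hGid : ∀ q ∉ Sing,
      ∫ v in V, (M v / (1 + H q - ⟪v, q⟫) ^ 2) • (G q - v) = 0) :
    ConvexOn ℝ Set.univ H ∧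
    ∀ p : EuclideanSpace ℝ (Fin n),
      H p = max (sSup {x : ℝ | ∃ q ∉ Sing, x = ⟪G q, p - q⟫ + H q}) (μ p - 1) :=
  stmt_13_general V M hM0 hMsupp hMint hM1 μ hμ Sing hSing H hHsing hHreg G hG
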